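/- arXiv:1307.1560 — 7 statements merged into one kernel-verified Lean document; each statement's English description precedes it below -/
import Mathlib

section
/- For every k ≥ 1 and every j with 1 ≤ j ≤ k, the sequence obtained from the Zimin word Z_k by deleting all letters smaller than j is j-interleaved, i.e., for each pair of adjacent elements of the resulting sequence exactly one of them equals j. -/
/-- Zimin words: `zimin 1 = [1]`, `zimin k = zimin (k-1) ++ [k] ++ zimin (k-1)`. -/
def zimin : ℕ → List ℕ
  | 0 => []
  | k + 1 => zimin k ++ [k + 1] ++ zimin k

/-- A sequence is `j`-interleaved if among each two adjacent elements exactly one equals `j`. -/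
def Interleaved (j : ℕ) (u : List ℕ) : Prop :=
  u.Chain' (fun a b => Xor' (a = j) (b = j))

/-- Delete from `u` all letters smaller than `j`. -/
def delBelow (j : ℕ) (u : List ℕ) : List ℕ :=
  u.filter (fun a => decide (j ≤ a))

/-- `compress u` removes every element of `u` that has a strictly larger element
both somewhere to its left and somewhere to its right. -/
def compress (u : List ℕ) : List ℕ :=
  (List.range u.length).filterMap fun i =>
    if ((u.take i).any fun l => decide (u.getD i 0 < l)) &&
       ((u.drop (i + 1)).any fun r => decide (u.getD i 0 < r))
    then none else some (u.getD i 0)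

/-!
Deleting the letters `≤ i` from `Z_k` leaves the Zimin word `Z_{k-i}` with every letter shifted
up by `i`, since the letters `≤ i` are exactly those of the innermost copies of `Z_i`.
Hence it suffices to see that `Z_n` is `1`-interleaved: by induction, `Z_n` begins and ends
with `1`, and the middle letter `n + 1` of `Z_{n+1}` differs from `1` once `Z_n` is nonempty.
-/

lemma zimin_reverse (n : ℕ) : (zimin n).reverse = zimin n := by
  induction n with
  | zero => rfl
  | succ n ih => simp [zimin, ih]

lemma zimin_head? (n : ℕ) : (zimin (n + 1)).head? = some 1 := by
  induction n with
  | zero => rfl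
  | succ n ih => rw [zimin, List.append_assoc, List.head?_append, ih]; rfl

lemma zimin_getLast? (n : ℕ) : (zimin (n + 1)).getLast? = some 1 := by
  rw [← List.head?_reverse, zimin_reverse, zimin_head?]

lemma delBelow_succ_zimin (i k : ℕ) :
    delBelow (i + 1) (zimin k) = (zimin (k - i)).map (· + i) := by
  induction k with
  | zero => simp [delBelow, zimin]
  | succ k ih =>
    rcases lt_or_ge k i with hki | hik
    · rw [Nat.sub_eq_zero_of_le hki.le] at ih
      rw [Nat.sub_eq_zero_of_le hki]
      simp_all [delBelow, zimin]
    · rw [zimin, delBelow, List.filter_append, List.filter_append, ← delBelow, ih,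
        Nat.sub_add_comm hik, zimin]
      simp [Nat.lt_succ_of_le hik]
      omega

lemma interleaved_map_iff {f : ℕ → ℕ} (hf : f.Injective) (a : ℕ) (u : List ℕ) :
    Interleaved (f a) (u.map f) ↔ Interleaved a u := by
  change List.IsChain _ (u.map f) ↔ List.IsChain _ u
  simp only [List.isChain_map, hf.eq_iff]

lemma Interleaved.append_singleton_append {a b : ℕ} {u : List ℕ} (hu : Interleaved a u)
    (hb : b ≠ a) (hhead : u.head? = some a) (hlast : u.getLast? = some a) :
    Interleaved a (u ++ [b] ++ u) := by
  refine List.isChain_append.2 ⟨List.isChain_append.2 ⟨hu, List.isChain_singleton b, ?_⟩, hu, ?_⟩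
  · simp only [hlast, List.head?_cons, Option.mem_some_iff]
    rintro _ rfl _ rfl
    exact Or.inl ⟨rfl, hb⟩
  · simp only [List.getLast?_append, hhead, List.getLast?_singleton, Option.some_or,
      Option.mem_some_iff]
    rintro _ rfl _ rfl
    exact Or.inr ⟨rfl, hb⟩

lemma zimin_interleaved_one (n : ℕ) : Interleaved 1 (zimin n) := by
  induction n with
  | zero => exact List.isChain_nil
  | succ n ih =>
    cases n with
    | zero => exact List.isChain_singleton 1
    | succ n => exact ih.append_singleton_append (by omega) (zimin_head? n) (zimin_getLast? n)

theorem zimin_delBelow_interleaved_general (k j : ℕ) (hj1 : 1 ≤ j) :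
    Interleaved j (delBelow j (zimin k)) := by
  obtain ⟨i, rfl⟩ : ∃ i, j = i + 1 := ⟨j - 1, by omega⟩
  rw [delBelow_succ_zimin, add_comm i 1, interleaved_map_iff (add_left_injective i) 1]
  exact zimin_interleaved_one _

/-- For every `k ≥ 1` and `1 ≤ j ≤ k`, deleting from `Z_k` all letters smaller than `j`
yields a `j`-interleaved sequence. -/
theorem zimin_delBelow_interleaved (k j : ℕ) (hk : 1 ≤ k) (hj1 : 1 ≤ j) (hjk : j ≤ k) :
    Interleaved j (delBelow j (zimin k)) :=
  zimin_delBelow_interleaved_general k j hj1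
end

section
/- A nonempty word u over the alphabet {1,...,k} is a factor (contiguous subword) of the Zimin word Z_k if and only if for every j with 1 ≤ j ≤ k, the sequence obtained from u by deleting all letters smaller than j is j-interleaved. -/
def raise (w : List ℕ) : List ℕ :=
  w.flatMap fun a => [a + 1, 1]

def lower (u : List ℕ) : List ℕ :=
  (delBelow 2 u).map (· - 1)

@[simp]
lemma raise_nil : raise [] = [] := rfl

@[simp]
lemma raise_cons (a : ℕ) (w : List ℕ) : raise (a :: w) = (a + 1) :: 1 :: raise w := rfl

lemma raise_append (v w : List ℕ) : raise (v ++ w) = raise v ++ raise w :=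
  List.flatMap_append

@[simp]
lemma lower_one_cons (u : List ℕ) : lower (1 :: u) = lower u := by
  simp [lower, delBelow]

lemma lower_cons_of_two_le {a : ℕ} (ha : 2 ≤ a) (u : List ℕ) :
    lower (a :: u) = (a - 1) :: lower u := by
  simp [lower, delBelow, ha]

lemma mem_lower {a : ℕ} {u : List ℕ} : a ∈ lower u ↔ 1 ≤ a ∧ a + 1 ∈ u := by
  simp only [lower, delBelow, List.mem_map, List.mem_filter, decide_eq_true_eq]
  constructor
  · rintro ⟨b, ⟨hb, h2⟩, rfl⟩
    exact ⟨by omega, by rwa [Nat.sub_add_cancel (by omega)]⟩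
  · rintro ⟨ha, hu⟩
    exact ⟨a + 1, ⟨hu, by omega⟩, rfl⟩

lemma lower_raise {w : List ℕ} (hpos : ∀ a ∈ w, 1 ≤ a) : lower (raise w) = w := by
  induction w with
  | nil => rfl
  | cons a w ih =>
    have ha : 2 ≤ a + 1 := by simpa using hpos a (by simp)
    rw [raise_cons, lower_cons_of_two_le ha, lower_one_cons, ih fun b hb => hpos b (by simp [hb])]
    rfl

lemma List.IsInfix.lower {u v : List ℕ} (h : u <:+: v) : lower u <:+: lower v :=
  (h.filter _).map _

lemma one_cons_raise_infix {w z : List ℕ} (h : w <:+: z) : 1 :: raise w <:+: 1 :: raise z := by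
  obtain ⟨s, t, rfl⟩ := h
  rcases s.eq_nil_or_concat with rfl | ⟨L, x, rfl⟩
  · exact ⟨[], raise t, by simp [raise_append]⟩
  · exact ⟨1 :: raise L ++ [x + 1], raise t, by simp [raise_append]⟩

lemma zimin_succ (k : ℕ) : zimin (k + 1) = 1 :: raise (zimin k) := by
  induction k with
  | zero => rfl
  | succ k ih =>
    change zimin (k + 1) ++ [k + 2] ++ zimin (k + 1) = 1 :: raise (zimin k ++ [k + 1] ++ zimin k)
    rw [ih, raise_append, raise_append]
    simp

lemma one_le_of_mem_zimin {k a : ℕ} (h : a ∈ zimin k) : 1 ≤ a := by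
  induction k with
  | zero => simp [zimin] at h
  | succ k ih =>
    simp only [zimin, List.mem_append, List.mem_singleton] at h
    rcases h with (h | h) | h <;> first | exact ih h | omega

lemma interleaved_iff {j : ℕ} {u : List ℕ} :
    Interleaved j u ↔ u.IsChain fun a b => a = j ∧ b ≠ j ∨ b = j ∧ a ≠ j :=
  Iff.rfl

lemma interleaved_map_iff_s6 {f : ℕ → ℕ} {i j : ℕ} (hf : ∀ a, f a = j ↔ a = i) (w : List ℕ) :
    Interleaved j (w.map f) ↔ Interleaved i w := by
  simp only [interleaved_iff, List.isChain_map, ne_eq, hf]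

lemma interleaved_one_cons_raise {w : List ℕ} (hpos : ∀ a ∈ w, 1 ≤ a) :
    Interleaved 1 (1 :: raise w) := by
  induction w with
  | nil => exact List.isChain_singleton 1
  | cons a w ih =>
    have ha : a + 1 ≠ 1 := by simpa using Nat.one_le_iff_ne_zero.mp (hpos a (by simp))
    have hw := ih fun b hb => hpos b (by simp [hb])
    simp_all [interleaved_iff, List.isChain_cons_cons]

/- The hypothesis `Interleaved 1 (1 :: u)` says that `u` is `1`-interleaved and does not start
with `1`. -/
lemma prefix_raise_lower :
    ∀ {u : List ℕ}, Interleaved 1 (1 :: u) → (∀ a ∈ u, 1 ≤ a) → u <+: raise (lower u)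
  | [], _, _ => List.nil_prefix
  | [a], h, hpos => by
    have ha1 : a ≠ 1 := by simpa [interleaved_iff] using h
    have ha : 2 ≤ a := by have := hpos a (by simp); omega
    rw [lower_cons_of_two_le ha, raise_cons, Nat.sub_add_cancel (by omega)]
    exact ⟨[1], rfl⟩
  | a :: b :: t, h, hpos => by
    rw [interleaved_iff, List.isChain_cons_cons, List.isChain_cons_cons] at h
    obtain ⟨h1a, hab, hbt⟩ := h
    have ha : 2 ≤ a := by have := hpos a (by simp); omega
    obtain rfl : b = 1 := by omega
    have ht := prefix_raise_lower hbt fun c hc => hpos c (by simp [hc])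
    rw [lower_cons_of_two_le ha, raise_cons, Nat.sub_add_cancel (by omega), lower_one_cons]
    exact (List.prefix_cons_inj a).mpr ((List.prefix_cons_inj 1).mpr ht)

lemma infix_one_cons_raise_lower {u : List ℕ} (h : Interleaved 1 u) (hpos : ∀ a ∈ u, 1 ≤ a) :
    u <:+: 1 :: raise (lower u) := by
  cases u with
  | nil => exact List.nil_infix
  | cons a t =>
    by_cases ha : a = 1
    · subst ha
      have ht := prefix_raise_lower h fun c hc => hpos c (by simp [hc])
      exact ((List.prefix_cons_inj 1).mpr ht).isInfix.trans (by rw [lower_one_cons])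
    · have h' : Interleaved 1 (1 :: a :: t) := by
        rw [interleaved_iff] at h ⊢
        exact h.cons (by simp [ha])
      exact (prefix_raise_lower h' hpos).isInfix.trans (List.suffix_cons 1 _).isInfix

lemma infix_zimin_succ_iff {k : ℕ} {u : List ℕ} (hpos : ∀ a ∈ u, 1 ≤ a) :
    u <:+: zimin (k + 1) ↔ Interleaved 1 u ∧ lower u <:+: zimin k := by
  have hZ : ∀ a ∈ zimin k, 1 ≤ a := fun a => one_le_of_mem_zimin
  have hlowerZ : lower (1 :: raise (zimin k)) = zimin k := by rw [lower_one_cons, lower_raise hZ]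
  rw [zimin_succ]
  constructor
  · intro h
    exact ⟨List.IsChain.infix (interleaved_one_cons_raise hZ) h, hlowerZ ▸ h.lower⟩
  · rintro ⟨h1, hlow⟩
    exact (infix_one_cons_raise_lower h1 hpos).trans (one_cons_raise_infix hlow)

lemma delBelow_lower {j : ℕ} (hj : 1 ≤ j) (u : List ℕ) :
    delBelow j (lower u) = (delBelow (j + 1) u).map (· - 1) := by
  simp only [lower, delBelow, List.filter_map, List.filter_filter]
  congr 1
  refine List.filter_congr fun a _ => ?_
  simp only [Function.comp_apply, ← Bool.decide_and, decide_eq_decide]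
  omega

lemma interleaved_delBelow_lower_iff {j : ℕ} (hj : 1 ≤ j) (u : List ℕ) :
    Interleaved j (delBelow j (lower u)) ↔ Interleaved (j + 1) (delBelow (j + 1) u) := by
  rw [delBelow_lower hj, interleaved_map_iff_s6 (i := j + 1) fun a => by omega]

lemma forall_interleaved_succ_iff {k : ℕ} {u : List ℕ} (hpos : ∀ a ∈ u, 1 ≤ a) :
    (∀ j, 1 ≤ j → j ≤ k + 1 → Interleaved j (delBelow j u)) ↔
      Interleaved 1 u ∧ ∀ j, 1 ≤ j → j ≤ k → Interleaved j (delBelow j (lower u)) := by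
  have hdel : delBelow 1 u = u := List.filter_eq_self.mpr fun a ha => by simpa using hpos a ha
  constructor
  · intro h
    refine ⟨hdel ▸ h 1 le_rfl (by omega), fun j hj hjk => ?_⟩
    rw [interleaved_delBelow_lower_iff hj]
    exact h (j + 1) (by omega) (by omega)
  · rintro ⟨h1, h⟩ j hj hjk
    obtain rfl | ⟨i, hi, rfl⟩ : j = 1 ∨ ∃ i, 1 ≤ i ∧ j = i + 1 :=
      (eq_or_lt_of_le hj).imp Eq.symm fun hj => ⟨j - 1, by omega, by omega⟩
    · rwa [hdel]
    · rw [← interleaved_delBelow_lower_iff hi]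
      exact h i hi (by omega)

theorem factor_zimin_iff_general (k : ℕ) (u : List ℕ)
    (halph : ∀ a ∈ u, 1 ≤ a ∧ a ≤ k) :
    u <:+: zimin k ↔ ∀ j, 1 ≤ j → j ≤ k → Interleaved j (delBelow j u) := by
  induction k generalizing u with
  | zero =>
    obtain rfl : u = [] := List.eq_nil_iff_forall_not_mem.mpr fun a ha => by
      have := halph a ha
      omega
    exact iff_of_true List.nil_infix fun j hj hj0 => by omega
  | succ k ih =>
    have hpos : ∀ a ∈ u, 1 ≤ a := fun a ha => (halph a ha).1
    have hlower : ∀ a ∈ lower u, 1 ≤ a ∧ a ≤ k := fun a ha => by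
      obtain ⟨ha1, hau⟩ := mem_lower.mp ha
      have := halph (a + 1) hau
      omega
    rw [infix_zimin_succ_iff hpos, forall_interleaved_succ_iff hpos, ih (lower u) hlower]

/-- A nonempty word over `{1,…,k}` is a factor of `Z_k` iff for every `1 ≤ j ≤ k`,
deleting all letters smaller than `j` yields a `j`-interleaved sequence. -/
theorem factor_zimin_iff (k : ℕ) (u : List ℕ) (hu : u ≠ [])
    (halph : ∀ a ∈ u, 1 ≤ a ∧ a ≤ k) :
    u <:+: zimin k ↔ ∀ j, 1 ≤ j → j ≤ k → Interleaved j (delBelow j u) :=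
  factor_zimin_iff_general k u halph
end

section
/- In every nonempty factor u of the Zimin word Z_k, the maximal letter occurring in u occurs exactly once in u. -/
namespace List

section

variable {α : Type*} {u l₁ l₂ : List α} {a : α}

theorem eq_nil_of_prefix_cons_of_not_mem (h : u <+: a :: l₂) (ha : a ∉ u) : u = [] := by
  rcases prefix_cons_iff.1 h with hu | ⟨t, rfl, -⟩
  · exact hu
  · exact absurd mem_cons_self ha

theorem IsInfix.infix_or_infix_of_not_mem (h : u <:+: l₁ ++ a :: l₂) (ha : a ∉ u) :
    u <:+: l₁ ∨ u <:+: l₂ := by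
  rcases infix_append_iff.1 h with h | h | ⟨v, w, rfl, hv, hw⟩
  · exact .inl h
  · rcases infix_cons_iff.1 h with h | h
    · exact .inl (eq_nil_of_prefix_cons_of_not_mem h ha ▸ nil_infix)
    · exact .inr h
  · have hw : w = [] := eq_nil_of_prefix_cons_of_not_mem hw fun haw => ha (mem_append_right v haw)
    subst hw
    simpa using Or.inl hv.isInfix

end

theorem foldr_max_zero_mem {u : List ℕ} (hu : u ≠ []) : u.foldr max 0 ∈ u :=
  maximum_mem (foldr_max_of_ne_nil hu).symm

theorem le_foldr_max_zero {u : List ℕ} {a : ℕ} (ha : a ∈ u) : a ≤ u.foldr max 0 :=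
  le_max_of_le ha le_rfl

end List

theorem le_of_mem_zimin {k a : ℕ} (h : a ∈ zimin k) : a ≤ k := by
  induction k with
  | zero => simp [zimin] at h
  | succ n ih =>
    simp only [zimin, List.mem_append, List.mem_singleton] at h
    rcases h with (h | rfl) | h
    · exact (ih h).trans n.le_succ
    · exact le_rfl
    · exact (ih h).trans n.le_succ

theorem count_zimin_succ (k : ℕ) : (zimin (k + 1)).count (k + 1) = 1 := by
  have h : k + 1 ∉ zimin k := fun h => by simpa using le_of_mem_zimin h
  simp [zimin, List.count_append, List.count_eq_zero_of_not_mem h]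

/-- In every nonempty factor `u` of `Z_k`, the maximal letter of `u` occurs exactly once. -/
theorem factor_zimin_max_once (k : ℕ) (u : List ℕ) (hu : u ≠ []) (hf : u <:+: zimin k) :
    u.count (u.foldr max 0) = 1 := by
  induction k generalizing u with
  | zero => exact absurd (List.infix_nil.1 hf) hu
  | succ n ih =>
    by_cases hm : n + 1 ∈ u
    · have hmax : u.foldr max 0 = n + 1 :=
        le_antisymm (le_of_mem_zimin (hf.subset (List.foldr_max_zero_mem hu)))
          (List.le_foldr_max_zero hm)
      rw [hmax]
      exact le_antisymm ((hf.sublist.count_le _).trans (count_zimin_succ n).le)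
        (List.count_pos_iff.2 hm)
    · rw [zimin, List.append_assoc, List.singleton_append] at hf
      exact (hf.infix_or_infix_of_not_mem hm).elim (ih u hu) (ih u hu)
end

section
/- For every nonempty factor u of the Zimin word Z_k, the length of compress(u) is at most 2k − 1. -/
/-! In `Z_k` any two equal letters are separated by a strictly larger one, and this passes to
factors. A letter survives `compress` only if it is a maximum of its prefix or of its suffix.
By the separation property, distinct prefix maxima carry distinct letters, and so do distinct
suffix maxima; as the letters lie in `{1, …, k}`, there are at most `k` of each kind, and a
position of the overall maximum is of both kinds. -/

open Finset

def SeparatedRepeats {α : Type*} [LT α] (u : List α) : Prop :=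
  ∀ a v, a :: v ++ [a] <:+: u → ∃ b ∈ v, a < b

theorem SeparatedRepeats.infix {α : Type*} [LT α] {u w : List α} (h : SeparatedRepeats w)
    (hu : u <:+: w) : SeparatedRepeats u :=
  fun a v hv => h a v (hv.trans hu)

theorem List.infix_append_cons_cases {α : Type*} {w l₁ l₂ : List α} {c : α}
    (h : w <:+: l₁ ++ c :: l₂) :
    w <:+: l₁ ∨ w <:+: l₂ ∨ ∃ s t, w = s ++ c :: t ∧ s <:+ l₁ ∧ t <+: l₂ := by
  rcases List.infix_append_iff.mp h with h | h | ⟨s, t, rfl, hs, ht⟩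
  · exact .inl h
  · rcases List.infix_cons_iff.mp h with h | h
    · rcases List.prefix_cons_iff.mp h with rfl | ⟨t, rfl, ht⟩
      · exact .inl List.nil_infix
      · exact .inr (.inr ⟨[], t, rfl, List.nil_suffix, ht⟩)
    · exact .inr (.inl h)
  · rcases List.prefix_cons_iff.mp ht with rfl | ⟨t', rfl, ht'⟩
    · exact .inl (by simpa using hs.isInfix)
    · exact .inr (.inr ⟨s, t', rfl, hs, ht'⟩)

theorem SeparatedRepeats.append_cons {α : Type*} [Preorder α] {l₁ l₂ : List α} {c : α}
    (h₁ : SeparatedRepeats l₁) (h₂ : SeparatedRepeats l₂)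
    (hc₁ : ∀ x ∈ l₁, x < c) (hc₂ : ∀ x ∈ l₂, x < c) : SeparatedRepeats (l₁ ++ c :: l₂) := by
  intro a v hv
  rcases List.infix_append_cons_cases hv with hv | hv | ⟨s, t, hst, hs, ht⟩
  · exact h₁ a v hv
  · exact h₂ a v hv
  · rcases s with _ | ⟨a', s⟩
    · simp only [List.nil_append, List.cons_append, List.cons.injEq] at hst
      obtain ⟨rfl, rfl⟩ := hst
      exact absurd (hc₂ a (ht.subset (by simp))) (lt_irrefl a)
    · simp only [List.cons_append, List.cons.injEq] at hst
      obtain ⟨rfl, hst⟩ := hst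
      have ha : a < c := hc₁ a (hs.subset List.mem_cons_self)
      have hc : c ∈ v ++ [a] := by rw [hst]; simp
      exact ⟨c, by simpa [ha.ne'] using hc, ha⟩

theorem mem_zimin_iff {a k : ℕ} : a ∈ zimin k ↔ 1 ≤ a ∧ a ≤ k := by
  induction k with
  | zero => simp only [zimin, List.not_mem_nil, false_iff]; omega
  | succ k ih => simp only [zimin, List.mem_append, List.mem_singleton, ih]; omega

theorem separatedRepeats_zimin (k : ℕ) : SeparatedRepeats (zimin k) := by
  induction k with
  | zero => intro a v hv; simpa [zimin] using hv.length_le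
  | succ k ih =>
    have hlt : ∀ x ∈ zimin k, x < k + 1 := fun x hx => Nat.lt_succ_of_le (mem_zimin_iff.mp hx).2
    simpa [zimin] using ih.append_cons ih hlt hlt

theorem card_toFinset_zimin (k : ℕ) : (zimin k).toFinset.card = k := by
  have : (zimin k).toFinset = Icc 1 k := by ext a; simp [mem_zimin_iff]
  simp [this]

theorem List.getElem_cons_drop_take_append_infix {α : Type*} {u : List α} {i j : ℕ}
    (hij : i < j) (hj : j < u.length) :
    u[i] :: (u.take j).drop (i + 1) ++ [u[j]] <:+: u := by
  have hi : i < (u.take j).length := by rw [List.length_take]; omega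
  have htake : u.take j = u.take i ++ u[i] :: (u.take j).drop (i + 1) := by
    conv_lhs => rw [← List.take_append_drop i (u.take j), List.drop_eq_getElem_cons hi]
    simp [List.take_take, Nat.min_eq_left hij.le]
  generalize (u.take j).drop (i + 1) = d at htake ⊢
  refine ⟨u.take i, u.drop (j + 1), ?_⟩
  calc u.take i ++ (u[i] :: d ++ [u[j]]) ++ u.drop (j + 1)
      = u.take j ++ [u[j]] ++ u.drop (j + 1) := by rw [htake]; simp
    _ = u := by rw [List.take_concat_get' u j hj, List.take_append_drop]

theorem SeparatedRepeats.exists_lt_between {α : Type*} [LT α] {u : List α}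
    (h : SeparatedRepeats u) {i j : ℕ} (hij : i < j) (hj : j < u.length) (he : u[i] = u[j]) :
    ∃ b ∈ (u.take j).drop (i + 1), u[i] < b :=
  h _ _ (by simpa [he] using List.getElem_cons_drop_take_append_infix hij hj)

def leftMaxima (u : List ℕ) : Finset ℕ :=
  (range u.length).filter fun i => ∀ x ∈ u.take i, x ≤ u.getD i 0

def rightMaxima (u : List ℕ) : Finset ℕ :=
  (range u.length).filter fun i => ∀ x ∈ u.drop i, x ≤ u.getD i 0

theorem length_compress_le_card_union (u : List ℕ) :
    (compress u).length ≤ #(leftMaxima u ∪ rightMaxima u) := by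
  rw [compress, List.length_filterMap_eq_countP, List.countP_eq_length_filter,
    ← List.toFinset_card_of_nodup (List.nodup_range.filter _)]
  refine card_le_card fun i hi => ?_
  simp only [List.mem_toFinset, List.mem_filter, List.mem_range] at hi
  obtain ⟨hi, hkept⟩ := hi
  simp only [Option.isSome_ite', Bool.and_eq_true, not_and_or, Bool.not_eq_true,
    List.any_eq_false, decide_eq_true_eq, not_lt] at hkept
  simp only [leftMaxima, rightMaxima, mem_union, mem_filter, mem_range, hi, true_and]
  refine hkept.imp id fun hright x hx => ?_
  rw [List.drop_eq_getElem_cons hi, List.mem_cons] at hx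
  rcases hx with rfl | hx
  · rw [List.getD_eq_getElem _ _ hi]
  · exact hright x hx

theorem SeparatedRepeats.injOn_getD {u : List ℕ} (h : SeparatedRepeats u) {S : Set ℕ}
    (hS : ∀ i ∈ S, i < u.length)
    (hle : ∀ i ∈ S, ∀ j ∈ S, i < j →
      ∀ b ∈ (u.take j).drop (i + 1), b ≤ max (u.getD i 0) (u.getD j 0)) :
    Set.InjOn (u.getD · 0) S := by
  have hne : ∀ i ∈ S, ∀ j ∈ S, i < j → u.getD i 0 ≠ u.getD j 0 := by
    intro i hi j hj hij he
    have hj' := hS j hj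
    have hle := hle i hi j hj hij
    rw [List.getD_eq_getElem _ _ (hij.trans hj'), List.getD_eq_getElem _ _ hj'] at he hle
    obtain ⟨b, hb, hlt⟩ := h.exists_lt_between hij hj' he
    have := hle b hb
    rw [he, max_self] at this
    omega
  intro i hi j hj he
  by_contra hij
  rcases lt_or_gt_of_ne hij with hij | hij
  exacts [hne i hi j hj hij he, hne j hj i hi hij he.symm]

theorem SeparatedRepeats.injOn_leftMaxima {u : List ℕ} (h : SeparatedRepeats u) :
    Set.InjOn (u.getD · 0) (leftMaxima u) := by
  refine h.injOn_getD (fun i hi => by simpa using (mem_filter.mp hi).1) ?_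
  intro i _ j hj _ b hb
  exact le_max_of_le_right ((mem_filter.mp hj).2 b (List.mem_of_mem_drop hb))

theorem SeparatedRepeats.injOn_rightMaxima {u : List ℕ} (h : SeparatedRepeats u) :
    Set.InjOn (u.getD · 0) (rightMaxima u) := by
  refine h.injOn_getD (fun i hi => by simpa using (mem_filter.mp hi).1) ?_
  intro i hi j _ _ b hb
  rw [List.drop_take] at hb
  exact le_max_of_le_left ((mem_filter.mp hi).2 b
    (List.drop_subset_drop_left u i.le_succ (List.mem_of_mem_take hb)))

theorem card_le_card_toFinset_of_injOn_getD {u : List ℕ} {S : Finset ℕ}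
    (hS : S ⊆ range u.length) (h : Set.InjOn (u.getD · 0) S) : #S ≤ u.toFinset.card :=
  card_le_card_of_injOn _ (fun i hi => by
    have hi : i < u.length := mem_range.mp (hS hi)
    rw [List.getD_eq_getElem _ _ hi, mem_coe, List.mem_toFinset]
    exact List.getElem_mem hi) h

theorem nonempty_leftMaxima_inter_rightMaxima {u : List ℕ} (hu : u ≠ []) :
    (leftMaxima u ∩ rightMaxima u).Nonempty := by
  obtain ⟨M, hM, hmax⟩ := u.toFinset.exists_max_image id (by simpa using hu)
  obtain ⟨i, hi, rfl⟩ := List.mem_iff_getElem.mp (List.mem_toFinset.mp hM)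
  refine ⟨i, ?_⟩
  simp only [leftMaxima, rightMaxima, mem_inter, mem_filter, mem_range, hi, true_and,
    List.getD_eq_getElem _ _ hi]
  exact ⟨fun x hx => hmax x (by simpa using List.mem_of_mem_take hx),
    fun x hx => hmax x (by simpa using List.mem_of_mem_drop hx)⟩

/-- For every nonempty factor `u` of `Z_k`, the length of `compress u` is at most `2k - 1`. -/
theorem compress_length_le (k : ℕ) (u : List ℕ) (hu : u ≠ []) (hf : u <:+: zimin k) :
    (compress u).length ≤ 2 * k - 1 := by
  have hsep : SeparatedRepeats u := (separatedRepeats_zimin k).infix hf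
  have hletters : u.toFinset.card ≤ k :=
    (card_le_card fun x hx => List.mem_toFinset.mpr (hf.subset (List.mem_toFinset.mp hx))).trans_eq
      (card_toFinset_zimin k)
  have hL : #(leftMaxima u) ≤ k :=
    (card_le_card_toFinset_of_injOn_getD (filter_subset _ _) hsep.injOn_leftMaxima).trans hletters
  have hR : #(rightMaxima u) ≤ k :=
    (card_le_card_toFinset_of_injOn_getD (filter_subset _ _) hsep.injOn_rightMaxima).trans hletters
  have hboth : 1 ≤ #(leftMaxima u ∩ rightMaxima u) :=
    card_pos.mpr (nonempty_leftMaxima_inter_rightMaxima hu)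
  have hunion := card_union_add_card_inter (leftMaxima u) (rightMaxima u)
  have hcompress := length_compress_le_card_union u
  omega
end

section
/- For every nonempty factor u of Z_k, compress(u) is first strictly increasing up to its (unique) maximum and then strictly decreasing: there is an index m such that compress(u) is strictly increasing on positions up to m and strictly decreasing from m on. -/
def EqualLettersSeparated (u : List ℕ) : Prop :=
  ∀ a b, a < b → b < u.length → u.getD a 0 = u.getD b 0 →
    ∃ r, a < r ∧ r < b ∧ u.getD a 0 < u.getD r 0

lemma List.getD_append_cons {α : Type*} (a b : List α) (c d : α) (i : ℕ) :
    (a ++ c :: b).getD i d =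
      if i < a.length then a.getD i d else if i = a.length then c
      else b.getD (i - a.length - 1) d := by
  split_ifs with h₁ h₂
  · exact List.getD_append _ _ _ _ h₁
  · rw [List.getD_append_right _ _ _ _ h₂.ge, h₂, Nat.sub_self, List.getD_cons_zero]
  · obtain ⟨j, hj⟩ : ∃ j, i - a.length = j + 1 := ⟨i - a.length - 1, by omega⟩
    rw [List.getD_append_right _ _ _ _ (by omega), hj, List.getD_cons_succ,
      Nat.add_sub_cancel]

lemma List.getD_mem_of_lt {α : Type*} {a : List α} {i : ℕ} (d : α) (hi : i < a.length) :
    a.getD i d ∈ a :=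
  List.getD_eq_getElem a d hi ▸ List.getElem_mem hi

namespace EqualLettersSeparated

lemma append_cons {a b : List ℕ} {c : ℕ} (ha : EqualLettersSeparated a)
    (hb : EqualLettersSeparated b) (hac : ∀ x ∈ a, x < c) (hbc : ∀ x ∈ b, x < c) :
    EqualLettersSeparated (a ++ c :: b) := by
  intro p q hpq hq heq
  have hlen : (a ++ c :: b).length = a.length + 1 + b.length := by
    simp only [List.length_append, List.length_cons]; omega
  simp only [List.getD_append_cons] at heq ⊢
  rcases lt_or_ge q a.length with hqa | hqa
  · simp only [hqa, hpq.trans hqa, if_true] at heq ⊢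
    obtain ⟨r, hpr, hrq, hlt⟩ := ha p q hpq hqa heq
    exact ⟨r, hpr, hrq, by simpa [hrq.trans hqa] using hlt⟩
  rcases lt_trichotomy p a.length with hpa | hpa | hpa
  · have hp := hac _ (List.getD_mem_of_lt 0 hpa)
    refine ⟨a.length, hpa, lt_of_le_of_ne hqa fun h => ?_, by simpa [hpa] using hp⟩
    subst h
    rw [if_pos hpa, if_neg (lt_irrefl _), if_pos rfl] at heq
    omega
  · have hq' := hbc _ (List.getD_mem_of_lt 0 (i := q - a.length - 1) (by omega))
    rw [if_neg hpa.not_lt, if_pos hpa, if_neg (by omega), if_neg (by omega)] at heq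
    omega
  · have hp : ¬ p < a.length ∧ p ≠ a.length := ⟨by omega, by omega⟩
    have hq : ¬ q < a.length ∧ q ≠ a.length := ⟨by omega, by omega⟩
    simp only [hp, hq, if_false] at heq ⊢
    obtain ⟨r, hpr, hrq, hlt⟩ := hb _ _ (by omega : p - a.length - 1 < q - a.length - 1)
      (by omega) heq
    refine ⟨r + a.length + 1, by omega, by omega, ?_⟩
    rwa [if_neg (by omega), if_neg (by omega), show r + a.length + 1 - a.length - 1 = r by omega]

lemma of_infix {u v : List ℕ} (hv : EqualLettersSeparated v) (huv : u <:+: v) :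
    EqualLettersSeparated u := by
  obtain ⟨s, t, rfl⟩ := huv
  have hshift : ∀ i < u.length, (s ++ u ++ t).getD (s.length + i) 0 = u.getD i 0 := by
    intro i hi
    rw [List.append_assoc, List.getD_append_right _ _ _ _ (by omega), Nat.add_sub_cancel_left,
      List.getD_append _ _ _ _ hi]
  intro a b hab hb heq
  obtain ⟨r, har, hrb, hlt⟩ := hv (s.length + a) (s.length + b) (by omega)
    (by simp only [List.length_append]; omega)
    (by rw [hshift a (by omega), hshift b hb, heq])
  refine ⟨r - s.length, by omega, by omega, ?_⟩
  rwa [← hshift a (by omega), ← hshift _ (by omega), Nat.add_sub_cancel' (by omega)]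

end EqualLettersSeparated

lemma le_of_mem_zimin_s16 {k x : ℕ} (hx : x ∈ zimin k) : x ≤ k := by
  induction k with
  | zero => simp [zimin] at hx
  | succ n ih =>
    simp only [zimin, List.mem_append, List.mem_singleton] at hx
    rcases hx with (hx | rfl) | hx <;> grind

lemma equalLettersSeparated_zimin (k : ℕ) : EqualLettersSeparated (zimin k) := by
  induction k with
  | zero => intro a b _ hb; simp [zimin] at hb
  | succ n ih =>
    rw [zimin, List.append_assoc, List.singleton_append]
    exact ih.append_cons ih (fun _ hx => Nat.lt_succ_of_le (le_of_mem_zimin_s16 hx))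
      (fun _ hx => Nat.lt_succ_of_le (le_of_mem_zimin_s16 hx))

def IsPrefixMax (u : List ℕ) (i : ℕ) : Prop :=
  ∀ j < i, u.getD j 0 ≤ u.getD i 0

def IsSuffixMax (u : List ℕ) (i : ℕ) : Prop :=
  ∀ j < u.length, i < j → u.getD j 0 ≤ u.getD i 0

instance (u : List ℕ) (i : ℕ) : Decidable (IsPrefixMax u i) :=
  inferInstanceAs (Decidable (∀ j < i, _))

instance (u : List ℕ) (i : ℕ) : Decidable (IsSuffixMax u i) :=
  inferInstanceAs (Decidable (∀ j < u.length, _))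

lemma isPrefixMax_iff_any_take {u : List ℕ} {i : ℕ} (hi : i ≤ u.length) :
    IsPrefixMax u i ↔ ((u.take i).any fun l => decide (u.getD i 0 < l)) = false := by
  simp only [IsPrefixMax, List.any_eq_false, List.mem_take_iff_getElem, decide_eq_true_eq, not_lt]
  constructor
  · rintro h _ ⟨j, hj, rfl⟩
    rw [← List.getD_eq_getElem _ 0]
    exact h j (lt_min_iff.mp hj).1
  · intro h j hj
    rw [List.getD_eq_getElem _ _ (hj.trans_le hi)]
    exact h _ ⟨j, by omega, rfl⟩

lemma isSuffixMax_iff_any_drop {u : List ℕ} {i : ℕ} :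
    IsSuffixMax u i ↔ ((u.drop (i + 1)).any fun r => decide (u.getD i 0 < r)) = false := by
  simp only [IsSuffixMax, List.any_eq_false, List.mem_drop_iff_getElem, decide_eq_true_eq, not_lt]
  constructor
  · rintro h _ ⟨j, hj, rfl⟩
    rw [← List.getD_eq_getElem _ 0]
    exact h (i + 1 + j) (by omega) (by omega)
  · intro h j hj hij
    obtain ⟨d, rfl⟩ := Nat.exists_eq_add_of_lt hij
    rw [List.getD_eq_getElem _ _ hj]
    exact h _ ⟨d, by omega, by simp only [Nat.add_right_comm]⟩

lemma List.filterMap_ite_none_some {α β : Type*} (p : α → Bool) (g : α → β) (l : List α) :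
    l.filterMap (fun x => if p x then none else some (g x)) = (l.filter fun x => !p x).map g := by
  induction l with
  | nil => rfl
  | cons x l ih => cases h : p x <;> simp [h, ih]

lemma compress_eq_map_filter (u : List ℕ) :
    compress u = ((List.range u.length).filter
      fun i => decide (IsPrefixMax u i ∨ IsSuffixMax u i)).map (u.getD · 0) := by
  rw [compress, List.filterMap_ite_none_some]
  congr 1
  refine List.filter_congr fun i hi => ?_
  rw [Bool.eq_iff_iff, decide_eq_true_eq, isPrefixMax_iff_any_take (List.mem_range.mp hi).le,
    isSuffixMax_iff_any_drop]
  cases (u.take i).any _ <;> cases (u.drop (i + 1)).any _ <;> decide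

namespace EqualLettersSeparated

variable {u : List ℕ} {a b p : ℕ}

lemma getD_lt_of_isPrefixMax (h : EqualLettersSeparated u) (hb : b < u.length)
    (hmax : IsPrefixMax u b) (hab : a < b) : u.getD a 0 < u.getD b 0 := by
  refine (hmax a hab).lt_of_ne fun heq => ?_
  obtain ⟨r, -, hrb, hlt⟩ := h a b hab hb heq
  exact (hmax r hrb).not_gt (heq ▸ hlt)

lemma getD_lt_of_isSuffixMax (h : EqualLettersSeparated u) (hb : b < u.length)
    (hmax : IsSuffixMax u a) (hab : a < b) : u.getD b 0 < u.getD a 0 := by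
  refine (hmax b hb hab).lt_of_ne fun heq => ?_
  obtain ⟨r, har, hrb, hlt⟩ := h a b hab hb heq.symm
  exact (hmax r (hrb.trans hb) har).not_gt hlt

lemma getD_lt_of_le_isPrefixMax (h : EqualLettersSeparated u) (hp : p < u.length)
    (hpmax : IsPrefixMax u p) (hkept : IsPrefixMax u b ∨ IsSuffixMax u b) (hab : a < b)
    (hbp : b ≤ p) : u.getD a 0 < u.getD b 0 := by
  rcases hkept with hb | hb
  · exact h.getD_lt_of_isPrefixMax (hbp.trans_lt hp) hb hab
  rcases hbp.lt_or_eq with hbp | rfl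
  · exact absurd (hb p hp hbp) (h.getD_lt_of_isPrefixMax hp hpmax hbp).not_ge
  · exact h.getD_lt_of_isPrefixMax hp hpmax hab

lemma getD_lt_of_isSuffixMax_le (h : EqualLettersSeparated u) (hpmax : IsSuffixMax u p)
    (hkept : IsPrefixMax u a ∨ IsSuffixMax u a) (hpa : p ≤ a) (hab : a < b)
    (hb : b < u.length) : u.getD b 0 < u.getD a 0 := by
  rcases hkept with ha | ha
  · rcases hpa.lt_or_eq with hpa | rfl
    · exact absurd (ha p hpa) (h.getD_lt_of_isSuffixMax (hab.trans hb) hpmax hpa).not_ge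
    · exact h.getD_lt_of_isSuffixMax hb hpmax hab
  · exact h.getD_lt_of_isSuffixMax hb ha hab

end EqualLettersSeparated

lemma List.Pairwise.exists_unimodal_map {s : List ℕ} (hs : s.Pairwise (· < ·)) {p : ℕ}
    (hp : p ∈ s) {f : ℕ → ℕ}
    (hinc : ∀ a ∈ s, ∀ b ∈ s, a < b → b ≤ p → f a < f b)
    (hdec : ∀ a ∈ s, ∀ b ∈ s, p ≤ a → a < b → f b < f a) :
    ∃ m < (s.map f).length,
      (∀ i j, i < j → j ≤ m → (s.map f).getD i 0 < (s.map f).getD j 0) ∧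
      (∀ i j, m ≤ i → i < j → j < (s.map f).length →
        (s.map f).getD j 0 < (s.map f).getD i 0) := by
  have hm : s.idxOf p < s.length := List.idxOf_lt_length_iff.mpr hp
  have hsm : s[s.idxOf p] = p := List.getElem_idxOf hm
  have hlt : ∀ i j (hi : i < s.length) (hj : j < s.length), i < j → s[i] < s[j] :=
    List.pairwise_iff_getElem.mp hs
  have hle : ∀ i j (hi : i < s.length) (hj : j < s.length), i ≤ j → s[i] ≤ s[j] :=
    fun i j hi hj hij => by
      rcases hij.lt_or_eq with hij | rfl
      exacts [(hlt i j hi hj hij).le, le_rfl]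
  have hget : ∀ i (hi : i < s.length), (s.map f).getD i 0 = f s[i] := fun i hi => by
    rw [List.getD_eq_getElem _ _ (by simpa using hi), List.getElem_map]
  refine ⟨s.idxOf p, by simpa using hm, fun i j hij hjm => ?_, fun i j hmi hij hj => ?_⟩
  · have hj : j < s.length := hjm.trans_lt hm
    rw [hget i (hij.trans hj), hget j hj]
    exact hinc _ (List.getElem_mem _) _ (List.getElem_mem _) (hlt i j _ _ hij)
      (hsm ▸ hle j _ hj hm hjm)
  · rw [List.length_map] at hj
    rw [hget i (hij.trans hj), hget j hj]
    exact hdec _ (List.getElem_mem _) _ (List.getElem_mem _) (hsm ▸ hle _ i hm _ hmi)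
      (hlt i j _ _ hij)

/-- For every nonempty factor `u` of `Z_k`, `compress u` is strictly increasing up to
its maximum position `m` and strictly decreasing from `m` on. -/
theorem compress_unimodal (k : ℕ) (u : List ℕ) (hu : u ≠ []) (hf : u <:+: zimin k) :
    ∃ m < (compress u).length,
      (∀ i j, i < j → j ≤ m → (compress u).getD i 0 < (compress u).getD j 0) ∧
      (∀ i j, m ≤ i → i < j → j < (compress u).length →
        (compress u).getD j 0 < (compress u).getD i 0) := by
  have hsep := (equalLettersSeparated_zimin k).of_infix hf
  obtain ⟨p, hp, hpmax⟩ := Finset.exists_max_image (Finset.range u.length) (u.getD · 0)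
    (by simpa using hu)
  rw [Finset.mem_range] at hp
  have hpre : IsPrefixMax u p := fun j hj => hpmax j (Finset.mem_range.mpr (hj.trans hp))
  have hsuf : IsSuffixMax u p := fun j hj _ => hpmax j (Finset.mem_range.mpr hj)
  have hkept : ∀ i ∈ (List.range u.length).filter
      (fun i => decide (IsPrefixMax u i ∨ IsSuffixMax u i)),
      i < u.length ∧ (IsPrefixMax u i ∨ IsSuffixMax u i) := by
    simp
  rw [compress_eq_map_filter]
  refine (List.pairwise_lt_range.filter _).exists_unimodal_map
    (List.mem_filter.mpr ⟨List.mem_range.mpr hp, by simp [hpre]⟩) ?_ ?_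
  · intro a _ b hb hab hbp
    exact hsep.getD_lt_of_le_isPrefixMax hp hpre (hkept b hb).2 hab hbp
  · intro a ha b hb hpa hab
    exact hsep.getD_lt_of_isSuffixMax_le hsuf (hkept a ha).2 hpa hab (hkept b hb).1
end

section
/- If a pattern π (a word over a variable alphabet V) occurs in Z_k via a non-erasing morphism h (i.e., h(π) is a factor of Z_k), then the pattern π_{(2)} obtained from π by deleting all variables x with max-letter rank equal to 1 (i.e., h(x) consisting only of 1's, equivalently h(x)=1) occurs in Z_{k-1} via some non-erasing morphism. -/
/-! Erasing the letter `1` and lowering every other letter by one is a monoid morphism that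
maps `Z_k` onto `Z_{k-1}` and preserves factors. Composed with `h`, it erases exactly the
variables of rank 1 (all letters of `Z_k` are positive) and sends every other variable to a
nonempty word. -/

theorem List.flatten_map_filter_of_eq_nil {α β : Type*} {p : α → Bool} {f : α → List β}
    {l : List α} (h : ∀ x ∈ l, p x = false → f x = []) :
    ((l.filter p).map f).flatten = (l.map f).flatten := by
  induction l with
  | nil => rfl
  | cons x l ih => by_cases hx : p x <;> simp_all

theorem List.foldr_max_zero_le_iff {l : List ℕ} {m : ℕ} :
    l.foldr max 0 ≤ m ↔ ∀ a ∈ l, a ≤ m := by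
  induction l <;> simp_all

theorem pos_of_mem_zimin {k a : ℕ} (ha : a ∈ zimin k) : 0 < a := by
  induction k with
  | zero => simp [zimin] at ha
  | succ k ih =>
    simp only [zimin, List.mem_append, List.mem_singleton] at ha
    obtain (ha | rfl) | ha := ha
    exacts [ih ha, k.succ_pos, ih ha]

def lowerLetters (u : List ℕ) : List ℕ :=
  (u.filter (2 ≤ ·)).map (· - 1)

@[simp]
theorem lowerLetters_append (u v : List ℕ) :
    lowerLetters (u ++ v) = lowerLetters u ++ lowerLetters v := by
  simp [lowerLetters]

theorem lowerLetters_flatten (L : List (List ℕ)) :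
    lowerLetters L.flatten = (L.map lowerLetters).flatten := by
  rw [lowerLetters, List.filter_flatten, List.map_flatten, List.map_map]
  rfl

theorem List.IsInfix.lowerLetters {u v : List ℕ} (h : u <:+: v) :
    _root_.lowerLetters u <:+: _root_.lowerLetters v :=
  (h.filter _).map _

theorem lowerLetters_eq_nil_iff {u : List ℕ} : lowerLetters u = [] ↔ u.foldr max 0 ≤ 1 := by
  simp only [lowerLetters, List.map_eq_nil_iff, List.filter_eq_nil_iff, decide_eq_true_eq,
    not_le, List.foldr_max_zero_le_iff, Nat.lt_succ_iff]

theorem lowerLetters_ne_nil {u : List ℕ} (hu : u ≠ []) (hpos : ∀ a ∈ u, 0 < a)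
    (hrank : u.foldr max 0 ≠ 1) : lowerLetters u ≠ [] := by
  obtain ⟨a, ha⟩ := List.exists_mem_of_ne_nil u hu
  have : 0 < u.foldr max 0 := List.le_max_of_le' 0 ha (hpos a ha)
  rw [Ne, lowerLetters_eq_nil_iff]
  omega

theorem lowerLetters_zimin (k : ℕ) : lowerLetters (zimin k) = zimin (k - 1) := by
  cases k with
  | zero => rfl
  | succ k =>
    induction k with
    | zero => rfl
    | succ k ih =>
      rw [zimin, lowerLetters_append, lowerLetters_append, ih]
      simp [zimin, lowerLetters]

theorem pattern_delete_rank_one_general {V : Type*} (k : ℕ) (π : List V) (h : V → List ℕ)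
    (hne : ∀ x, h x ≠ [])
    (hocc : ((π.map h).flatten) <:+: zimin k) :
    ∃ g : V → List ℕ,
      (∀ x ∈ π.filter (fun x => decide ((h x).foldr max 0 ≠ 1)), g x ≠ []) ∧
      (((π.filter (fun x => decide ((h x).foldr max 0 ≠ 1))).map g).flatten) <:+: zimin (k - 1) := by
  refine ⟨fun x => lowerLetters (h x), ?_, ?_⟩
  · intro x hx
    rw [List.mem_filter, decide_eq_true_iff] at hx
    refine lowerLetters_ne_nil (hne x) (fun a ha => pos_of_mem_zimin (hocc.subset ?_)) hx.2
    exact List.mem_flatten_of_mem (List.mem_map_of_mem hx.1) ha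
  · have hdeleted : ∀ x ∈ π, decide ((h x).foldr max 0 ≠ 1) = false → lowerLetters (h x) = [] :=
      fun x _ hx => lowerLetters_eq_nil_iff.2 (by simp_all)
    have hlowered := hocc.lowerLetters
    rw [lowerLetters_flatten, List.map_map, lowerLetters_zimin] at hlowered
    rwa [List.flatten_map_filter_of_eq_nil hdeleted]

/-- If a pattern `π` occurs in `Z_k` via a non-erasing morphism `h`, then the pattern obtained
by deleting all variables of rank 1 occurs in `Z_{k-1}` via some non-erasing morphism. -/
theorem pattern_delete_rank_one {V : Type*} (k : ℕ) (hk : 1 ≤ k) (π : List V) (h : V → List ℕ)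
    (hne : ∀ x, h x ≠ []) (halph : ∀ x, ∀ a ∈ h x, 1 ≤ a ∧ a ≤ k)
    (hocc : ((π.map h).flatten) <:+: zimin k) :
    ∃ g : V → List ℕ,
      (∀ x ∈ π.filter (fun x => decide ((h x).foldr max 0 ≠ 1)), g x ≠ []) ∧
      (((π.filter (fun x => decide ((h x).foldr max 0 ≠ 1))).map g).flatten) <:+: zimin (k - 1) :=
  pattern_delete_rank_one_general k π h hne hocc
end

section
/- If π occurs in Z_k via a non-erasing morphism h, then the set V_1 of variables of rank 1 under h is a free set for π: there exist sets A, B ⊆ V with V_1 ⊆ B \ A such that for every two-letter factor xy of π, x ∈ A if and only if y ∈ B. -/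
namespace Interleaved

variable {j : ℕ} {u v : List ℕ}

lemma append_singleton_append_s18 (hu : Interleaved j u) (hhead : u.head? = some j)
    (hlast : u.getLast? = some j) {a : ℕ} (ha : a ≠ j) : Interleaved j (u ++ [a] ++ u) := by
  refine (hu.append (List.isChain_singleton a) ?_).append hu ?_
  · rw [hlast]
    rintro _ ⟨⟩ _ ⟨⟩
    exact .inl ⟨rfl, ha⟩
  · rw [hhead, List.getLast?_concat]
    rintro _ ⟨⟩ _ ⟨⟩
    exact .inr ⟨rfl, ha⟩

lemma of_isInfix (hu : Interleaved j u) (hvu : v <:+: u) : Interleaved j v :=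
  List.IsChain.infix hu hvu

lemma getLast_ne_iff_head_eq (h : Interleaved j (u ++ v)) (hu : u ≠ []) (hv : v ≠ []) :
    u.getLast hu ≠ j ↔ v.head hv = j :=
  xor_iff_not_iff'.1 <| (List.isChain_append.1 h).2.2 _ (List.getLast?_eq_some_getLast hu) _
    (List.head?_eq_some_head hv)

end Interleaved

lemma zimin_succ_head?_getLast? :
    ∀ k, (zimin (k + 1)).head? = some 1 ∧ (zimin (k + 1)).getLast? = some 1
  | 0 => ⟨rfl, rfl⟩
  | k + 1 => by
    obtain ⟨hhead, hlast⟩ := zimin_succ_head?_getLast? k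
    rw [zimin, List.getLast?_append, hlast, List.append_assoc, List.head?_append, hhead]
    exact ⟨rfl, rfl⟩

lemma interleaved_zimin : ∀ k, Interleaved 1 (zimin k)
  | 0 => List.IsChain.nil
  | 1 => List.isChain_singleton 1
  | k + 2 =>
    (interleaved_zimin (k + 1)).append_singleton_append_s18 (zimin_succ_head?_getLast? k).1
      (zimin_succ_head?_getLast? k).2 (by omega)

lemma List.eq_of_foldr_max_eq {l : List ℕ} {j : ℕ} (hle : ∀ a ∈ l, j ≤ a)
    (hmax : l.foldr max 0 = j) : ∀ a ∈ l, a = j :=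
  fun a ha => le_antisymm (hmax ▸ List.le_max_of_le' 0 ha le_rfl) (hle a ha)

/-- If `π` occurs in `Z_k` via a non-erasing morphism `h`, then the set of variables of
rank 1 under `h` is a free set for `π`. -/
theorem rank_one_free_set {V : Type*} (k : ℕ) (π : List V) (h : V → List ℕ)
    (hne : ∀ x, h x ≠ []) (halph : ∀ x, ∀ a ∈ h x, 1 ≤ a ∧ a ≤ k)
    (hocc : ((π.map h).flatten) <:+: zimin k) :
    ∃ A B : Set V, {x | (h x).foldr max 0 = 1} ⊆ B \ A ∧
      ∀ x y : V, [x, y] <:+: π → (x ∈ A ↔ y ∈ B) := by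
  refine ⟨{x | (h x).getLast (hne x) ≠ 1}, {x | (h x).head (hne x) = 1}, ?_, ?_⟩
  · intro x hx
    have hall := List.eq_of_foldr_max_eq (fun a ha => (halph x a ha).1) hx
    exact ⟨hall _ (List.head_mem _), fun hA => hA (hall _ (List.getLast_mem _))⟩
  · intro x y hxy
    have hxy' : h x ++ h y <:+: (π.map h).flatten := by
      simpa using (hxy.map h).flatten
    exact ((interleaved_zimin k).of_isInfix (hxy'.trans hocc)).getLast_ne_iff_head_eq
      (hne x) (hne y)
end
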